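/- arXiv:2410.10065 — 4 statements merged into one kernel-verified Lean document; each statement's English description precedes it below -/
import Mathlib

section
/- Fermat-type rule (limiting version). Let Ω ⊆ X be nonempty and closed, and let f : X → ℝ̄ be lower semicontinuous relative to Ω at x̄ ∈ Ω, with f(x̄) finite. If x̄ is a local minimizer of f on Ω, i.e., there exists δ > 0 with f(x) ≥ f(x̄) for all x ∈ Ω ∩ B(x̄, δ), then 0 ∈ ∂_Ω f(x̄). -/
open Filter Topology Set

noncomputable section

/-- A normed space is locally uniformly convex. -/
def LocUnifConvex (E : Type*) [NormedAddCommGroup E] : Prop :=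
  ∀ x : E, ‖x‖ = 1 → ∀ ε : ℝ, 0 < ε →
    ∃ δ : ℝ, 0 < δ ∧ ∀ y : E, ‖y‖ = 1 → 2 - δ < ‖x + y‖ → ‖x - y‖ < ε

/-- Standing assumptions of the paper: `X` is reflexive, both `X` and its dual `X*` are
locally uniformly convex, and the norm of `X` is Fréchet differentiable at every
nonzero point. -/
def StandingAssumptions (X : Type*) [NormedAddCommGroup X] [NormedSpace ℝ X] : Prop :=
  Function.Surjective (⇑(NormedSpace.inclusionInDoubleDual ℝ X)) ∧
  LocUnifConvex X ∧ LocUnifConvex (X →L[ℝ] ℝ) ∧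
  ∀ x : X, x ≠ 0 → DifferentiableAt ℝ (fun y : X => ‖y‖) x

variable {X : Type*}

open scoped Classical in
/-- The restriction `f_Ω` of `f` to `Ω` (equal to `+∞` off `Ω`). -/
def restr (f : X → EReal) (Ω : Set X) : X → EReal := fun x => if x ∈ Ω then f x else ⊤

/-- The epigraph of an extended-real-valued function, as a subset of `X × ℝ`. -/
def epiSet (g : X → EReal) : Set (X × ℝ) := {p | g p.1 ≤ (p.2 : EReal)}

/-- The paper's addition on `ℝ̄ = ℝ ∪ {±∞}`, with the convention `∞ - ∞ = ∞`
(i.e. `⊤` dominates). -/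
def pAdd (a b : EReal) : EReal := if a = ⊤ ∨ b = ⊤ then ⊤ else a + b

section NormedX
variable [NormedAddCommGroup X] [NormedSpace ℝ X]

/-- The `ε`-normal set to `S ⊆ X` at `xb`. -/
def eNormal (ε : ℝ) (xb : X) (S : Set X) : Set (X →L[ℝ] ℝ) :=
  {xs | Filter.limsup (fun x => ((xs (x - xb) / ‖x - xb‖ : ℝ) : EReal))
      (nhdsWithin xb S) ≤ (ε : EReal)}

/-- The `ε`-normal set to `S ⊆ X × ℝ` at `zb`, where `X × ℝ` carries the norm
`‖(x, r)‖ = ‖x‖ + |r|` and the dual pairing is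
`⟨(x*, r*), (x, r)⟩ = ⟨x*, x⟩ + r* r`. -/
def eNormalProd (ε : ℝ) (zb : X × ℝ) (S : Set (X × ℝ)) : Set ((X →L[ℝ] ℝ) × ℝ) :=
  {zs | Filter.limsup
      (fun z => (((zs.1 (z.1 - zb.1) + zs.2 * (z.2 - zb.2)) /
        (‖z.1 - zb.1‖ + |z.2 - zb.2|) : ℝ) : EReal)) (nhdsWithin zb S) ≤ (ε : EReal)}

/-- The tangent cone to `Ω` at `xb`. -/
def tanCone (Ω : Set X) (xb : X) : Set X :=
  {v | ∃ (t : ℕ → ℝ) (w : ℕ → X), (∀ k, 0 < t k) ∧ Tendsto t atTop (nhds 0) ∧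
    Tendsto w atTop (nhds v) ∧ ∀ k, xb + t k • w k ∈ Ω}

/-- The duality mapping `J(x) = {x* : ⟨x*, x⟩ = ‖x‖² = ‖x*‖²}`. -/
def dualityMap (x : X) : Set (X →L[ℝ] ℝ) := {xs | xs x = ‖x‖ ^ 2 ∧ xs x = ‖xs‖ ^ 2}

/-- `J(A) = ⋃ x ∈ A, J(x)`. -/
def dualityMapSet (A : Set X) : Set (X →L[ℝ] ℝ) := ⋃ x ∈ A, dualityMap x

/-- The geometric `ε`-subdifferential `∂̂_ε g(xb)` (empty unless `g(xb)` is finite). -/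
def geomSub (ε : ℝ) (g : X → EReal) (xb : X) : Set (X →L[ℝ] ℝ) :=
  {xs | ∃ r : ℝ, g xb = (r : EReal) ∧ (xs, (-1 : ℝ)) ∈ eNormalProd ε (xb, r) (epiSet g)}

/-- The `ε`-regular subdifferential of `f` relative to `Ω` at `xb`:
`∂̂^ε_Ω f(xb) = ∂̂_ε f_Ω(xb) ∩ J(T(xb, Ω))`. -/
def relRegSub (ε : ℝ) (Ω : Set X) (f : X → EReal) (xb : X) : Set (X →L[ℝ] ℝ) :=
  geomSub ε (restr f Ω) xb ∩ dualityMapSet (tanCone Ω xb)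

/-- Weak* convergence of a sequence of functionals. -/
def WeakStarTendsto (u : ℕ → X →L[ℝ] ℝ) (l : X →L[ℝ] ℝ) : Prop :=
  ∀ v : X, Tendsto (fun k => u k v) atTop (nhds (l v))

/-- The limiting subdifferential of `f` relative to `Ω` at `xb`. -/
def relLimSub (Ω : Set X) (f : X → EReal) (xb : X) : Set (X →L[ℝ] ℝ) :=
  {xs | ∃ (ε : ℕ → ℝ) (x : ℕ → X) (u : ℕ → X →L[ℝ] ℝ),
    (∀ k, 0 < ε k) ∧ Antitone ε ∧ Tendsto ε atTop (nhds 0) ∧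
    (∀ k, x k ∈ Ω) ∧ Tendsto x atTop (nhds xb) ∧
    Tendsto (fun k => f (x k)) atTop (nhds (f xb)) ∧
    (∀ k, u k ∈ relRegSub (ε k) Ω f (x k)) ∧ WeakStarTendsto u xs}

/-- The (Mordukhovich) limiting subdifferential of `g` at `xb`. -/
def limSub (g : X → EReal) (xb : X) : Set (X →L[ℝ] ℝ) :=
  {xs | ∃ (ε : ℕ → ℝ) (x : ℕ → X) (u : ℕ → X →L[ℝ] ℝ),
    (∀ k, 0 < ε k) ∧ Antitone ε ∧ Tendsto ε atTop (nhds 0) ∧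
    Tendsto x atTop (nhds xb) ∧ Tendsto (fun k => g (x k)) atTop (nhds (g xb)) ∧
    (∀ k, u k ∈ geomSub (ε k) g (x k)) ∧ WeakStarTendsto u xs}

/-- `f` is lower semicontinuous relative to `Ω` at `xb`. -/
def LscRelAt (f : X → EReal) (Ω : Set X) (xb : X) : Prop :=
  f xb ≤ Filter.liminf f (nhdsWithin xb Ω)

/-- `f` is lower semicontinuous relative to `Ω` (at every point of `Ω ∩ dom f`). -/
def LscRelOn (f : X → EReal) (Ω : Set X) : Prop :=
  ∀ x ∈ Ω, f x ≠ ⊤ → LscRelAt f Ω x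

/-- `f` is lower semicontinuous relative to `Ω` around `xb`. -/
def LscRelAround (f : X → EReal) (Ω : Set X) (xb : X) : Prop :=
  ∃ U ∈ 𝓝 xb, ∀ x ∈ U ∩ Ω, f x ≠ ⊤ → LscRelAt f Ω x

/-- `f` is locally Lipschitz relative to `Ω` around `xb` with modulus `ℓ`. -/
def LocLipRel (f : X → EReal) (Ω : Set X) (xb : X) (ℓ : ℝ) : Prop :=
  ∃ U ∈ 𝓝 xb, (∀ x ∈ U ∩ Ω, ∃ r : ℝ, f x = (r : EReal)) ∧
    ∀ x ∈ U ∩ Ω, ∀ u ∈ U ∩ Ω, |(f x).toReal - (f u).toReal| ≤ ℓ * ‖x - u‖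

/-- A set is locally closed around a point. -/
def LocallyClosedAt {E : Type*} [MetricSpace E] (S : Set E) (p : E) : Prop :=
  ∃ r : ℝ, 0 < r ∧ IsClosed (S ∩ Metric.closedBall p r)

/-- `f` is (finite and) continuous relative to `Ω`. -/
def ContRelOn (f : X → EReal) (Ω : Set X) : Prop :=
  (∀ x ∈ Ω, ∃ r : ℝ, f x = (r : EReal)) ∧
  ∀ x ∈ Ω, Tendsto f (nhdsWithin x Ω) (nhds (f x))

/-- `f` is convex on the set `S`. -/
def ConvexOnSet (f : X → EReal) (S : Set X) : Prop :=
  ∀ x ∈ S, ∀ y ∈ S, ∀ t : ℝ, 0 ≤ t → t ≤ 1 →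
    f (t • x + (1 - t) • y) ≤ (t : EReal) * f x + ((1 - t : ℝ) : EReal) * f y

/-- Monotonicity of a set-valued map from `X` into `X*`. -/
def MonotoneSV (F : X → Set (X →L[ℝ] ℝ)) : Prop :=
  ∀ x u : X, ∀ xs us : X →L[ℝ] ℝ, xs ∈ F x → us ∈ F u → 0 ≤ (xs - us) (x - u)

end NormedX

end


/-- Fermat-type rule, limiting version. -/
theorem fermat_rule_limiting
    {X : Type*} [NormedAddCommGroup X] [NormedSpace ℝ X] [CompleteSpace X]
    (hX : StandingAssumptions X)
    (Ω : Set X) (hne : Ω.Nonempty) (hcl : IsClosed Ω)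
    (f : X → EReal) (xb : X) (hxb : xb ∈ Ω) (r : ℝ) (hr : f xb = (r : EReal))
    (hlsc : LscRelAt f Ω xb)
    (hmin : ∃ δ : ℝ, 0 < δ ∧ ∀ x ∈ Ω ∩ Metric.closedBall xb δ, f xb ≤ f x) :
    (0 : X →L[ℝ] ℝ) ∈ relLimSub Ω f xb := by
  obtain ⟨δ, hδ, hδmin⟩ := hmin
  refine ⟨fun k => 1 / (k + 1), fun _ => xb, fun _ => 0, fun k => by positivity,
    ?_, tendsto_one_div_add_atTop_nhds_zero_nat, fun _ => hxb, tendsto_const_nhds,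
    tendsto_const_nhds, fun k => ⟨?_, ?_⟩, fun v => by simpa using tendsto_const_nhds⟩
  · intro a b hab
    have h : (a:ℝ) + 1 ≤ (b:ℝ) + 1 := by exact_mod_cast Nat.succ_le_succ hab
    exact one_div_le_one_div_of_le (by positivity) h
  · -- geomSub
    refine ⟨r, by simpa [restr, hxb] using hr, ?_⟩
    have hε : (0:ℝ) < 1 / (k + 1 : ℝ) := by positivity
    unfold eNormalProd
    simp only [Set.mem_setOf_eq]
    refine Filter.limsup_le_of_le (by isBoundedDefault) ?_
    have h1 : ∀ᶠ z : X × ℝ in nhdsWithin (xb, r) (epiSet (restr f Ω)),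
        z ∈ epiSet (restr f Ω) := eventually_mem_nhdsWithin
    have h2 : ∀ᶠ z : X × ℝ in nhdsWithin (xb, r) (epiSet (restr f Ω)),
        z.1 ∈ Metric.closedBall xb δ := by
      have : Tendsto (fun z : X × ℝ => z.1) (nhdsWithin (xb, r) (epiSet (restr f Ω)))
          (nhds xb) := (continuous_fst.tendsto _).mono_left nhdsWithin_le_nhds
      exact this (Metric.closedBall_mem_nhds xb hδ)
    filter_upwards [h1, h2] with z hz hzb
    have hΩ : z.1 ∈ Ω := by
      by_contra h
      simp only [epiSet, restr, Set.mem_setOf_eq, if_neg h] at hz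
      exact (EReal.coe_lt_top z.2).not_ge hz
    have hfz : f z.1 ≤ (z.2 : EReal) := by
      simpa [epiSet, restr, hΩ] using hz
    have hrz : r ≤ z.2 := by
      have : (r : EReal) ≤ (z.2 : EReal) := hr ▸ ((hδmin z.1 ⟨hΩ, hzb⟩).trans hfz)
      exact_mod_cast this
    have : (((0 : X →L[ℝ] ℝ)) (z.1 - xb) + (-1 : ℝ) * (z.2 - r)) /
        (‖z.1 - xb‖ + |z.2 - r|) ≤ 0 := by
      apply div_nonpos_of_nonpos_of_nonneg
      · simp; linarith
      · positivity
    calc (((0 : X →L[ℝ] ℝ) (z.1 - xb) + (-1 : ℝ) * (z.2 - r)) /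
        (‖z.1 - xb‖ + |z.2 - r|) : ℝ) ≤ ((0:ℝ) : EReal) := by exact_mod_cast this
      _ ≤ _ := by exact_mod_cast hε.le
  · -- dualityMapSet
    refine Set.mem_biUnion (x := (0:X)) ?_ ?_
    · exact ⟨fun k => 1 / (k + 1), fun _ => 0, fun k => by positivity,
        tendsto_one_div_add_atTop_nhds_zero_nat, tendsto_const_nhds, fun k => by simpa⟩
    · constructor <;> simp
end

section
/- Let Ω ⊆ X be nonempty and locally closed around x̄ ∈ Ω ∩ dom f, and let f : X → ℝ̄ be lower semicontinuous relative to Ω. If f is locally Lipschitz relative to Ω around x̄ with modulus ℓ ≥ 0, then there exists η > 0 such that for every ε ≥ 0 and every x ∈ B(x̄, η) ∩ Ω: (a) ‖x*‖ ≤ ℓ·|y*| + ε(1 + ℓ) whenever (x*, y*) ∈ N̂_ε((x, f(x)), epi f_Ω) ∩ (J(T(x, Ω)) × ℝ); and in particular (b) ‖x*‖ ≤ ℓ + ε(1 + ℓ) for every x* ∈ ∂̂^ε_Ω f(x). -/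
open Filter Topology Set

/-- dual norm bounds under relative Lipschitz continuity. -/
theorem dual_bound_of_locLipRel
    {X : Type*} [NormedAddCommGroup X] [NormedSpace ℝ X] [CompleteSpace X]
    (hX : StandingAssumptions X)
    (Ω : Set X) (hne : Ω.Nonempty)
    (f : X → EReal) (xb : X) (hxb : xb ∈ Ω) (hdom : f xb ≠ ⊤)
    (hloc : LocallyClosedAt Ω xb) (hlsc : LscRelOn f Ω)
    (ℓ : ℝ) (hℓ : 0 ≤ ℓ) (hlip : LocLipRel f Ω xb ℓ) :
    ∃ η : ℝ, 0 < η ∧ ∀ ε : ℝ, 0 ≤ ε → ∀ x ∈ Metric.closedBall xb η ∩ Ω,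
      (∀ (xs : X →L[ℝ] ℝ) (ys : ℝ) (r : ℝ), f x = (r : EReal) →
        (xs, ys) ∈ eNormalProd ε (x, r) (epiSet (restr f Ω)) →
        xs ∈ dualityMapSet (tanCone Ω x) →
        ‖xs‖ ≤ ℓ * |ys| + ε * (1 + ℓ)) ∧
      ∀ xs ∈ relRegSub ε Ω f x, ‖xs‖ ≤ ℓ + ε * (1 + ℓ) := by
  classical
  obtain ⟨U, hU, hfin, hlipU⟩ := hlip
  obtain ⟨ρ, hρ, hball⟩ := Metric.mem_nhds_iff.mp hU
  refine ⟨ρ / 3, by positivity, ?_⟩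
  intro ε hε x hx
  obtain ⟨hxball, hxΩ⟩ := hx
  have hxd : dist x xb ≤ ρ / 3 := Metric.mem_closedBall.mp hxball
  have hxU : x ∈ U := hball (Metric.mem_ball.mpr (lt_of_le_of_lt hxd (by linarith)))
  have key : ∀ (xs : X →L[ℝ] ℝ) (ys : ℝ) (r : ℝ), f x = (r : EReal) →
      (xs, ys) ∈ eNormalProd ε (x, r) (epiSet (restr f Ω)) →
      xs ∈ dualityMapSet (tanCone Ω x) →
      ‖xs‖ ≤ ℓ * |ys| + ε * (1 + ℓ) := by
    intro xs ys r hr hN hJ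
    simp only [dualityMapSet, Set.mem_iUnion, dualityMap, Set.mem_setOf_eq] at hJ
    obtain ⟨v, hv, hxs1, hxs2⟩ := hJ
    have hnv : ‖v‖ = ‖xs‖ := by nlinarith [norm_nonneg v, norm_nonneg xs]
    rcases eq_or_lt_of_le (norm_nonneg xs) with h0 | hpos
    · rw [← h0]; positivity
    obtain ⟨t, w, htp, ht0, hw, hmem⟩ := hv
    simp only [eNormalProd, Set.mem_setOf_eq] at hN
    have hvpos : 0 < ‖v‖ := hnv ▸ hpos
    have hrx : (f x).toReal = r := by rw [hr]; simp
    have main : ∀ ε' : ℝ, ε < ε' → ‖xs‖ ≤ ℓ * |ys| + ε' * (1 + ℓ) := by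
      intro ε' hε'
      have hε'0 : 0 ≤ ε' := le_trans hε hε'.le
      have hClt := Filter.eventually_lt_of_limsup_lt
        (lt_of_le_of_lt hN (EReal.coe_lt_coe_iff.mpr hε'))
      set y : ℕ → X := fun k => x + t k • w k with hy
      have htw0 : Tendsto (fun k => t k * ‖w k‖) atTop (𝓝 0) := by
        have := ht0.mul hw.norm
        simpa using this
      have hyU : ∀ᶠ k in atTop, y k ∈ U ∩ Ω := by
        filter_upwards [htw0.eventually (eventually_lt_nhds (show (0:ℝ) < ρ/3 by positivity))]
          with k hk
        refine ⟨hball ?_, hmem k⟩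
        have h1 : ‖t k • w k‖ = t k * ‖w k‖ := by
          rw [norm_smul, Real.norm_eq_abs, abs_of_pos (htp k)]
        have h2 : dist (y k) xb ≤ ‖x - xb‖ + ‖t k • w k‖ := by
          rw [dist_eq_norm]
          have h3 : y k - xb = (x - xb) + t k • w k := by simp [hy]; abel
          rw [h3]; exact norm_add_le _ _
        have h4 : ‖x - xb‖ ≤ ρ / 3 := by rw [← dist_eq_norm]; exact hxd
        exact Metric.mem_ball.mpr (by rw [h1] at h2; linarith)
      set rk : ℕ → ℝ := fun k => (f (y k)).toReal with hrk
      have hfy : ∀ᶠ k in atTop, f (y k) = ((rk k : ℝ) : EReal) := by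
        filter_upwards [hyU] with k hk
        obtain ⟨s, hs⟩ := hfin (y k) hk
        rw [hs]
        simp [hrk, hs]
      have hlipk : ∀ᶠ k in atTop, |rk k - r| ≤ ℓ * (t k * ‖w k‖) := by
        filter_upwards [hyU] with k hk
        have h5 := hlipU (y k) hk x ⟨hxU, hxΩ⟩
        rw [hrx] at h5
        have h2 : ‖y k - x‖ = t k * ‖w k‖ := by
          simp [hy, norm_smul, Real.norm_eq_abs, abs_of_pos (htp k)]
        rw [h2] at h5
        exact h5
      have hrk_tend : Tendsto rk atTop (𝓝 r) := by
        have h0 : Tendsto (fun k => rk k - r) atTop (𝓝 0) := by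
          apply squeeze_zero_norm'
          · filter_upwards [hlipk] with k hk
            simpa [Real.norm_eq_abs] using hk
          · simpa using htw0.const_mul ℓ
        have := h0.add_const r
        simpa using this
      have hytend : Tendsto y atTop (𝓝 x) := by
        have h6 : Tendsto (fun k => t k • w k) atTop (𝓝 ((0:ℝ) • v)) := ht0.smul hw
        simp only [zero_smul] at h6
        have h7 : Tendsto (fun k => x + t k • w k) atTop (𝓝 (x + 0)) :=
          (tendsto_const_nhds (x := x) (f := atTop)).add h6
        simpa [hy] using h7
      have hz : Tendsto (fun k => ((y k, rk k) : X × ℝ)) atTop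
          (𝓝[epiSet (restr f Ω)] (x, r)) := by
        rw [tendsto_nhdsWithin_iff]
        refine ⟨hytend.prodMk_nhds hrk_tend, ?_⟩
        filter_upwards [hfy] with k hk
        show restr f Ω (y k) ≤ ((rk k : ℝ) : EReal)
        unfold restr
        rw [if_pos (hmem k), hk]
      have hev := hz.eventually hClt
      have hwpos : ∀ᶠ k in atTop, 0 < ‖w k‖ := by
        filter_upwards [hw.norm.eventually (eventually_gt_nhds (half_lt_self hvpos))] with k hk
        linarith
      have hkey : ∀ᶠ k in atTop, xs (w k) ≤ (ℓ * |ys| + ε' * (1 + ℓ)) * ‖w k‖ := by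
        filter_upwards [hev, hlipk, hwpos] with k hk1 hk2 hk3
        have ha : 0 < t k := htp k
        have hd1 : y k - x = t k • w k := by simp [hy]
        have hnorm : ‖y k - x‖ = t k * ‖w k‖ := by
          rw [hd1, norm_smul, Real.norm_eq_abs, abs_of_pos ha]
        have happ : xs (y k - x) = t k * xs (w k) := by
          rw [hd1, map_smul, smul_eq_mul]
        have hDpos : 0 < ‖y k - x‖ + |rk k - r| := by
          rw [hnorm]
          exact add_pos_of_pos_of_nonneg (mul_pos ha hk3) (abs_nonneg _)
        have hreal : (xs (y k - x) + ys * (rk k - r)) / (‖y k - x‖ + |rk k - r|) < ε' :=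
          EReal.coe_lt_coe_iff.mp hk1
        rw [div_lt_iff₀ hDpos] at hreal
        rw [happ, hnorm] at hreal
        have habs : -(|ys| * |rk k - r|) ≤ ys * (rk k - r) := by
          have h7 := neg_abs_le (ys * (rk k - r))
          rwa [abs_mul] at h7
        have h6 : ε' * |rk k - r| ≤ ε' * (ℓ * (t k * ‖w k‖)) :=
          mul_le_mul_of_nonneg_left hk2 hε'0
        have h7 : |ys| * |rk k - r| ≤ |ys| * (ℓ * (t k * ‖w k‖)) :=
          mul_le_mul_of_nonneg_left hk2 (abs_nonneg ys)
        have h8 : t k * xs (w k) ≤ t k * ((ℓ * |ys| + ε' * (1 + ℓ)) * ‖w k‖) := by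
          nlinarith [hreal, habs, h6, h7]
        exact le_of_mul_le_mul_left h8 ha
      have hxsv : xs v ≤ (ℓ * |ys| + ε' * (1 + ℓ)) * ‖v‖ := by
        have h1 : Tendsto (fun k => xs (w k)) atTop (𝓝 (xs v)) :=
          (xs.continuous.tendsto v).comp hw
        have h2 : Tendsto (fun k => (ℓ * |ys| + ε' * (1 + ℓ)) * ‖w k‖) atTop
            (𝓝 ((ℓ * |ys| + ε' * (1 + ℓ)) * ‖v‖)) := hw.norm.const_mul _
        exact le_of_tendsto_of_tendsto h1 h2 hkey
      have h8 : ‖xs‖ ^ 2 ≤ (ℓ * |ys| + ε' * (1 + ℓ)) * ‖xs‖ := by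
        rw [← hxs2, ← hnv]; exact hxsv
      nlinarith [hpos]
    have h1 : (0:ℝ) < 1 + ℓ := by linarith
    refine le_of_forall_pos_le_add fun δ hδ => ?_
    have h2 := main (ε + δ / (1 + ℓ)) (lt_add_of_pos_right _ (by positivity))
    have h3 : (ε + δ / (1 + ℓ)) * (1 + ℓ) = ε * (1 + ℓ) + δ := by field_simp
    linarith
  refine ⟨key, ?_⟩
  rintro xs ⟨⟨r, hrr, hN⟩, hJ⟩
  have hr : f x = (r : EReal) := by
    unfold restr at hrr
    rwa [if_pos hxΩ] at hrr
  have := key xs (-1) r hr hN hJ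
  simpa using this
end

section
/- Scalar multiplication rule for relative ε-regular subdifferentials. Let f : X → ℝ̄ and Ω ⊆ X be such that f is lower semicontinuous relative to Ω around x̄ ∈ Ω ∩ dom f and Ω is locally closed around x̄. Then for every ε ≥ 0 and every λ > 0, λ·∂̂^{ε̂}_Ω f(x̄) ⊆ ∂̂^ε_Ω(λf)(x̄) ⊆ λ·∂̂^{ε̃}_Ω f(x̄), where ε̂ := ε / max{λ, 1} and ε̃ := ε · max{1/λ, 1}. -/
open Filter Topology Set

section Auxiliary

private lemma ereal_div_of_mul_le {l : ℝ} (hl : 0 < l) {A : EReal} {s : ℝ}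
    (h : (l : EReal) * A ≤ (s : EReal)) : A ≤ ((s / l : ℝ) : EReal) := by
  induction A with
  | bot => exact bot_le
  | coe a =>
      rw [← EReal.coe_mul, EReal.coe_le_coe_iff] at h
      rw [EReal.coe_le_coe_iff, le_div_iff₀ hl]
      linarith [h]
  | top =>
      rw [EReal.coe_mul_top_of_pos hl] at h
      exact absurd h (by simp)

private lemma real_quot_ineq {l c N a bb b : ℝ} (hl : 0 < l) (hlc : l ≤ c) (hc1 : 1 ≤ c)
    (ha : 0 ≤ a) (hbb : 0 ≤ bb) (hb : 0 < b)
    (hz : N / (a + bb) < b / c) (hN0 : a + bb = 0 → N = 0) :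
    (l * N) / (a + l * bb) ≤ b := by
  have hc0 : (0:ℝ) < c := lt_of_lt_of_le one_pos hc1
  rcases le_or_gt N 0 with hN | hN
  · have hd : (0:ℝ) ≤ a + l * bb := by positivity
    have : l * N / (a + l * bb) ≤ 0 :=
      div_nonpos_iff.mpr (Or.inr ⟨mul_nonpos_of_nonneg_of_nonpos hl.le hN, hd⟩)
    linarith
  · have hab : 0 < a + bb := by
      rcases lt_or_eq_of_le (by positivity : (0:ℝ) ≤ a + bb) with h | h
      · exact h
      · exact absurd (hN0 h.symm) (by linarith)
    have hab2 : 0 < a + l * bb := by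
      rcases lt_or_ge 0 a with h | h
      · have : 0 ≤ l * bb := by positivity
        linarith
      · have haz : a = 0 := le_antisymm h ha
        have hbbpos : 0 < bb := by linarith
        have : 0 < l * bb := mul_pos hl hbbpos
        linarith
    rw [div_le_iff₀ hab2]
    rw [div_lt_div_iff₀ hab hc0] at hz
    have key : l * N * c ≤ b * (a + l * bb) * c := by
      nlinarith [mul_lt_mul_of_pos_left hz hl,
        mul_nonneg (mul_nonneg hb.le ha) (sub_nonneg.2 hlc),
        mul_nonneg (mul_nonneg (mul_nonneg hl.le hb.le) hbb) (sub_nonneg.2 hc1)]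
    exact le_of_mul_le_mul_right key hc0

private lemma geomSub_smul {X : Type*} [NormedAddCommGroup X] [NormedSpace ℝ X]
    {g : X → EReal} {xb : X} {δ l : ℝ} (hδ : 0 ≤ δ) (hl : 0 < l)
    {u : X →L[ℝ] ℝ} (hu : u ∈ geomSub δ g xb) :
    l • u ∈ geomSub (δ * max l 1) (fun x => (l : EReal) * g x) xb := by
  obtain ⟨r, hr, hn⟩ := hu
  refine ⟨l * r, by show (l : EReal) * g xb = ((l * r : ℝ) : EReal); rw [hr, EReal.coe_mul], ?_⟩
  have hc1 : (1:ℝ) ≤ max l 1 := le_max_right _ _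
  have hlc : l ≤ max l 1 := le_max_left _ _
  have hcpos : (0:ℝ) < max l 1 := lt_of_lt_of_le one_pos hc1
  simp only [eNormalProd, Set.mem_setOf_eq] at hn ⊢
  rw [← EReal.le_of_forall_lt_iff_le]
  intro b hb
  rw [EReal.coe_lt_coe_iff] at hb
  have hb' : (0:ℝ) < b := lt_of_le_of_lt (mul_nonneg hδ hcpos.le) hb
  have hδc : δ < b / max l 1 := (lt_div_iff₀ hcpos).2 hb
  have hev : ∀ᶠ z in nhdsWithin (xb, r) (epiSet g),
      (((u (z.1 - (xb, r).1) + (-1 : ℝ) * (z.2 - (xb, r).2)) /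
        (‖z.1 - (xb, r).1‖ + |z.2 - (xb, r).2|) : ℝ) : EReal) < ((b / max l 1 : ℝ) : EReal) :=
    Filter.eventually_lt_of_limsup_lt
      (lt_of_le_of_lt hn (EReal.coe_lt_coe_iff.2 hδc))
  have hcont : ContinuousWithinAt (fun z : X × ℝ => (z.1, z.2 / l))
      (epiSet fun x => (l : EReal) * g x) (xb, l * r) :=
    ((continuous_fst.prodMk (continuous_snd.div_const l))).continuousWithinAt
  have hmaps : Set.MapsTo (fun z : X × ℝ => (z.1, z.2 / l))
      (epiSet fun x => (l : EReal) * g x) (epiSet g) :=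
    fun z hz => ereal_div_of_mul_le hl hz
  have htend := hcont.tendsto_nhdsWithin hmaps
  have heq : ((xb, l * r).1, (xb, l * r).2 / l) = (xb, r) := by
    rw [Prod.mk.injEq]
    exact ⟨rfl, mul_div_cancel_left₀ r hl.ne'⟩
  rw [heq] at htend
  have hev2 := htend.eventually hev
  refine Filter.limsup_le_of_le (by isBoundedDefault) (hev2.mono fun z hz => ?_)
  dsimp only at hz ⊢
  rw [EReal.coe_lt_coe_iff] at hz
  rw [EReal.coe_le_coe_iff]
  have h1 : (l • u) (z.1 - xb) + (-1 : ℝ) * (z.2 - l * r)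
      = l * (u (z.1 - xb) + (-1 : ℝ) * (z.2 / l - r)) := by
    rw [ContinuousLinearMap.smul_apply, smul_eq_mul]
    field_simp
  have h2 : |z.2 - l * r| = l * |z.2 / l - r| := by
    have he : z.2 - l * r = l * (z.2 / l - r) := by
      field_simp
    rw [he, abs_mul, abs_of_pos hl]
  rw [h1, h2]
  refine real_quot_ineq hl hlc hc1 (norm_nonneg _) (abs_nonneg _) hb' hz (fun h0 => ?_)
  have hx : ‖z.1 - xb‖ = 0 := by
    have := abs_nonneg (z.2 / l - r); have := norm_nonneg (z.1 - xb); linarith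
  have hy : |z.2 / l - r| = 0 := by
    have := norm_nonneg (z.1 - xb); linarith
  have hx' : z.1 - xb = 0 := norm_eq_zero.1 hx
  have hy' : z.2 / l - r = 0 := abs_eq_zero.1 hy
  rw [hx', hy', map_zero]
  ring

private lemma restr_smul' {X : Type*} (f : X → EReal) (Ω : Set X) {l : ℝ} (hl : 0 < l) :
    restr (fun x => (l : EReal) * f x) Ω = fun x => (l : EReal) * restr f Ω x := by
  funext x
  by_cases h : x ∈ Ω <;> simp [restr, h, EReal.coe_mul_top_of_pos hl]

private lemma tanCone_smul' {X : Type*} [NormedAddCommGroup X] [NormedSpace ℝ X]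
    {Ω : Set X} {xb : X} {v : X} (hv : v ∈ tanCone Ω xb) {l : ℝ} (hl : 0 < l) :
    l • v ∈ tanCone Ω xb := by
  obtain ⟨t, w, ht, ht0, hw, hmem⟩ := hv
  refine ⟨fun k => t k / l, fun k => l • w k, fun k => div_pos (ht k) hl,
    by simpa using ht0.div_const l, hw.const_smul l, fun k => ?_⟩
  rw [smul_smul, div_mul_cancel₀ _ hl.ne']
  exact hmem k

private lemma dualityMap_smul' {X : Type*} [NormedAddCommGroup X] [NormedSpace ℝ X]
    {v : X} {u : X →L[ℝ] ℝ} (hu : u ∈ dualityMap v) {l : ℝ} (hl : 0 < l) :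
    l • u ∈ dualityMap (l • v) := by
  obtain ⟨h1, h2⟩ := hu
  have e : (l • u) (l • v) = l * (l * u v) := by
    rw [ContinuousLinearMap.smul_apply, map_smul, smul_eq_mul, smul_eq_mul]
  constructor
  · rw [e, h1, norm_smul_of_nonneg hl.le]; ring
  · have hnorm : ‖l • u‖ = ‖l‖ * ‖u‖ := norm_smul l u
    rw [e, h2, hnorm, Real.norm_eq_abs, abs_of_pos hl]; ring

private lemma dualityMapSet_smul' {X : Type*} [NormedAddCommGroup X] [NormedSpace ℝ X]
    {Ω : Set X} {xb : X} {u : X →L[ℝ] ℝ} (hu : u ∈ dualityMapSet (tanCone Ω xb))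
    {l : ℝ} (hl : 0 < l) : l • u ∈ dualityMapSet (tanCone Ω xb) := by
  simp only [dualityMapSet, Set.mem_iUnion] at hu ⊢
  obtain ⟨v, hv, huv⟩ := hu
  exact ⟨l • v, tanCone_smul' hv hl, dualityMap_smul' huv hl⟩

end Auxiliary
/-- scalar multiplication rule for relative ε-regular subdifferentials. -/
theorem relRegSub_smul_chain
    {X : Type*} [NormedAddCommGroup X] [NormedSpace ℝ X] [CompleteSpace X]
    (hX : StandingAssumptions X)
    (Ω : Set X) (f : X → EReal) (xb : X) (hxb : xb ∈ Ω) (hdom : f xb ≠ ⊤)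
    (hloc : LocallyClosedAt Ω xb) (hlsc : LscRelAround f Ω xb)
    (ε l : ℝ) (hε : 0 ≤ ε) (hl : 0 < l) :
    (fun u : X →L[ℝ] ℝ => l • u) '' relRegSub (ε / max l 1) Ω f xb ⊆
      relRegSub ε Ω (fun x => (l : EReal) * f x) xb ∧
    relRegSub ε Ω (fun x => (l : EReal) * f x) xb ⊆
      (fun u : X →L[ℝ] ℝ => l • u) '' relRegSub (ε * max (1 / l) 1) Ω f xb := by
  have hmax : (0:ℝ) < max l 1 := lt_of_lt_of_le one_pos (le_max_right _ _)
  constructor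
  · rintro xs ⟨u, ⟨hgeo, hdual⟩, rfl⟩
    have h1 := geomSub_smul (div_nonneg hε hmax.le) hl hgeo
    rw [div_mul_cancel₀ ε hmax.ne'] at h1
    refine ⟨?_, dualityMapSet_smul' hdual hl⟩
    rw [restr_smul' f Ω hl]
    exact h1
  · rintro xs ⟨hgeo, hdual⟩
    rw [restr_smul' f Ω hl] at hgeo
    have h1 := geomSub_smul hε (inv_pos.2 hl) hgeo
    have h2 : (fun x => ((l⁻¹ : ℝ) : EReal) * ((l : EReal) * restr f Ω x)) = restr f Ω := by
      funext x
      rw [← mul_assoc, ← EReal.coe_mul, inv_mul_cancel₀ hl.ne', EReal.coe_one, one_mul]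
    rw [h2] at h1
    refine ⟨l⁻¹ • xs, ⟨?_, dualityMapSet_smul' hdual (inv_pos.2 hl)⟩, smul_inv_smul₀ hl.ne' xs⟩
    rw [one_div]
    exact h1
end

section
/- Mean value inequality for relatively Lipschitzian functions. Let a, b ∈ X with a ≠ b, let f : X → ℝ̄ be finite on the segment [a, b] and locally Lipschitz relative to [a, b] around every point x ∈ [a, b]. Then there exist c ∈ [a, b) and x* ∈ ∂_{[a,b]} f(c) such that ⟨x*, b − a⟩ ≥ f(b) − f(a). -/
open Filter Topology Set

/-!
Along the segment, `g s = f (a + s • (b - a))` is locally Lipschitz on `[0, 1]`, hence Lipschitz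
by compactness, hence absolutely continuous: `∫₀¹ g' = g 1 - g 0` forces `g' t ≥ g 1 - g 0` at some
interior point `t` where `g` is differentiable. At `c = a + t • (b - a)` every functional `x*` with
`x* (b - a) = g' t` satisfies the Fréchet ε-subgradient inequality for `f` restricted to the segment,
for every `ε > 0`. Since `c` is interior to the segment, the whole line `ℝ (b - a)` lies in the
tangent cone, so `x*` can be chosen in the duality map of a tangent vector; the constant sequence
at `c` then puts `x*` in the limiting subdifferential.
-/

open AffineMap MeasureTheory
open scoped NNReal

theorem LipschitzOnWith.exists_slope_le_deriv {g : ℝ → ℝ} {K : ℝ≥0} {a b : ℝ} (hab : a < b)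
    (hg : LipschitzOnWith K g (Icc a b)) :
    ∃ t ∈ Ioo a b, DifferentiableAt ℝ g t ∧ g b - g a ≤ deriv g t * (b - a) := by
  have hac : AbsolutelyContinuousOnInterval g a b := by
    apply LipschitzOnWith.absolutelyContinuousOnInterval
    rwa [uIcc_of_le hab.le]
  by_contra! hlt
  set σ := (g b - g a) / (b - a)
  have hderiv_lt : ∀ᵐ t ∂volume.restrict (Ioc a b), deriv g t < σ := by
    rw [ae_restrict_iff' measurableSet_Ioc]
    filter_upwards [hac.ae_differentiableAt, Measure.ae_ne volume b] with t hdiff htb ht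
    have ht' : t ∈ Ioo a b := ⟨ht.1, lt_of_le_of_ne ht.2 htb⟩
    rw [lt_div_iff₀ (sub_pos.2 hab)]
    exact hlt t ht' (hdiff (Ioc_subset_Icc_self.trans (uIcc_of_le hab.le).ge ht))
  have : ∫ t in a..b, deriv g t < ∫ _ in a..b, σ := by
    refine intervalIntegral.integral_lt_integral_of_ae_le_of_measure_setOfPred_lt_ne_zero hab.le
      hac.intervalIntegrable_deriv intervalIntegrable_const (hderiv_lt.mono fun t ht => ht.le) ?_
    intro h0
    have hfalse : ∀ᵐ t ∂volume.restrict (Ioc a b), False := by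
      filter_upwards [hderiv_lt, measure_eq_zero_iff_ae_notMem.1 h0] with t h1 h2 using h2 h1
    rw [eventually_false_iff_eq_bot, ae_eq_bot, Measure.restrict_eq_zero, Real.volume_Ioc,
      ENNReal.ofReal_eq_zero, sub_nonpos] at hfalse
    exact hfalse.not_gt hab
  rw [hac.integral_deriv_eq_sub, intervalIntegral.integral_const, smul_eq_mul,
    mul_div_cancel₀ _ (sub_pos.2 hab).ne'] at this
  exact this.false

section

variable {X : Type*} [NormedAddCommGroup X] [NormedSpace ℝ X]

theorem locallyLipschitzOn_toReal_comp_lineMap {a b : X} {f : X → EReal}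
    (hf : ∀ x ∈ segment ℝ a b, ∃ ℓ, LocLipRel f (segment ℝ a b) x ℓ) :
    LocallyLipschitzOn (Icc (0 : ℝ) 1) fun s => (f (lineMap a b s)).toReal := by
  intro t ht
  obtain ⟨ℓ, U, hU, -, hlip⟩ := hf _ (lineMap_mem_segment ℝ a b ht)
  refine ⟨Real.toNNReal (ℓ * dist a b), Icc 0 1 ∩ lineMap a b ⁻¹' U,
    inter_mem_nhdsWithin _ (lineMap_continuous.continuousAt.preimage_mem_nhds hU),
    LipschitzOnWith.of_dist_le' fun s hs s' hs' => ?_⟩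
  calc dist (f (lineMap a b s)).toReal (f (lineMap a b s')).toReal
      ≤ ℓ * ‖lineMap a b s - lineMap a b s'‖ :=
        hlip _ ⟨hs.2, lineMap_mem_segment ℝ a b hs.1⟩ _ ⟨hs'.2, lineMap_mem_segment ℝ a b hs'.1⟩
    _ = ℓ * dist a b * dist s s' := by rw [← dist_eq_norm, dist_lineMap_lineMap]; ring

theorem mem_geomSub_of_eventually_le {g : X → EReal} {c : X} {r : ℝ} (hgc : g c = r)
    {xs : X →L[ℝ] ℝ} {ε : ℝ} (hε : 0 ≤ ε)
    (h : ∀ᶠ z in 𝓝 c, ((r + xs (z - c) - ε * ‖z - c‖ : ℝ) : EReal) ≤ g z) :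
    xs ∈ geomSub ε g c := by
  refine ⟨r, hgc, ?_⟩
  have h' : ∀ᶠ z in 𝓝[epiSet g] (c, r), ((r + xs (z.1 - c) - ε * ‖z.1 - c‖ : ℝ) : EReal) ≤ g z.1 :=
    (continuous_fst.tendsto (c, r)).eventually h |>.filter_mono nhdsWithin_le_nhds
  show limsup _ _ ≤ (ε : EReal)
  refine limsup_le_of_le (h := ?_)
  filter_upwards [h', self_mem_nhdsWithin] with z hgz hepi
  have hz : r + xs (z.1 - c) - ε * ‖z.1 - c‖ ≤ z.2 := EReal.coe_le_coe_iff.1 (hgz.trans hepi)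
  rw [EReal.coe_le_coe_iff]
  rcases (add_nonneg (norm_nonneg (z.1 - c)) (abs_nonneg (z.2 - r))).eq_or_lt with hden | hden
  · rw [← hden, div_zero]
    exact hε
  · rw [div_le_iff₀ hden]
    linarith [mul_nonneg hε (abs_nonneg (z.2 - r))]

theorem eventually_le_restr_segment {a b : X} (hab : a ≠ b) {f : X → EReal} {φ : ℝ → ℝ}
    (hφ : ∀ s ∈ Icc (0 : ℝ) 1, f (lineMap a b s) = φ s) {t m : ℝ} (hderiv : HasDerivAt φ m t)
    {xs : X →L[ℝ] ℝ} (hxs : xs (b - a) = m) {ε : ℝ} (hε : 0 < ε) :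
    ∀ᶠ z in 𝓝 (lineMap a b t), ((φ t + xs (z - lineMap a b t) - ε * ‖z - lineMap a b t‖ : ℝ) :
      EReal) ≤ restr f (segment ℝ a b) z := by
  have hab' : 0 < dist a b := dist_pos.2 hab
  obtain ⟨δ, hδ, hsmall⟩ := Metric.eventually_nhds_iff.1
    ((hasDerivAt_iff_isLittleO.1 hderiv).def (mul_pos hε hab'))
  filter_upwards [Metric.ball_mem_nhds _ (mul_pos hδ hab')] with z hz
  by_cases hzΩ : z ∈ segment ℝ a b
  swap
  · simp [restr, hzΩ]
  obtain ⟨s, hs, rfl⟩ : ∃ s ∈ Icc (0 : ℝ) 1, lineMap a b s = z := by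
    rwa [segment_eq_image_lineMap] at hzΩ
  have hsub : lineMap a b s - lineMap a b t = (s - t) • (b - a) := by
    simp only [lineMap_apply_module', add_sub_add_right_eq_sub, ← sub_smul]
  have hdist : ‖lineMap a b s - lineMap a b t‖ = |s - t| * dist a b := by
    rw [← dist_eq_norm, dist_lineMap_lineMap, Real.dist_eq]
  have hst : dist s t < δ := by
    rw [Metric.mem_ball, dist_eq_norm, hdist, ← Real.dist_eq] at hz
    exact lt_of_mul_lt_mul_right hz hab'.le
  have hlo := hsmall hst
  rw [Real.norm_eq_abs, Real.norm_eq_abs, smul_eq_mul] at hlo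
  rw [restr, if_pos hzΩ, hφ s hs, EReal.coe_le_coe_iff, hdist, hsub, map_smul, hxs, smul_eq_mul]
  linarith [neg_abs_le (φ s - φ t - (s - t) * m)]

theorem mem_tanCone_of_eventually_mem {Ω : Set X} {c w : X}
    (h : ∀ᶠ s in 𝓝[>] (0 : ℝ), c + s • w ∈ Ω) : w ∈ tanCone Ω c := by
  have hτ : Tendsto (fun k : ℕ => 1 / ((k : ℝ) + 1)) atTop (𝓝[>] 0) :=
    tendsto_nhdsWithin_iff.2 ⟨tendsto_one_div_add_atTop_nhds_zero_nat,
      Eventually.of_forall fun k => by simp only [mem_Ioi]; positivity⟩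
  obtain ⟨N, hN⟩ := eventually_atTop.1 (hτ.eventually h)
  have hτN := hτ.comp (tendsto_add_atTop_nat N)
  exact ⟨fun k => 1 / (((k + N : ℕ) : ℝ) + 1), fun _ => w, fun k => by positivity,
    tendsto_nhds_of_tendsto_nhdsWithin hτN, tendsto_const_nhds, fun k => hN _ (by omega)⟩

theorem smul_sub_mem_tanCone_segment {a b : X} {t : ℝ} (ht : t ∈ Ioo (0 : ℝ) 1) (μ : ℝ) :
    μ • (b - a) ∈ tanCone (segment ℝ a b) (lineMap a b t) := by
  apply mem_tanCone_of_eventually_mem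
  have hcont : Tendsto (fun s : ℝ => t + s * μ) (𝓝 0) (𝓝 t) :=
    Continuous.tendsto' (by fun_prop) 0 t (by simp)
  filter_upwards [nhdsWithin_le_nhds (hcont.eventually (Icc_mem_nhds ht.1 ht.2))] with s hs
  rw [segment_eq_image_lineMap]
  refine ⟨t + s * μ, hs, ?_⟩
  simp only [lineMap_apply_module', add_smul, mul_smul]
  abel

theorem exists_apply_eq_mem_dualityMap {v : X} (hv : v ≠ 0) (m : ℝ) :
    ∃ xs : X →L[ℝ] ℝ, xs v = m ∧ xs ∈ dualityMap ((m / ‖v‖ ^ 2) • v) := by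
  obtain ⟨j, hj, hjv⟩ := exists_dual_vector ℝ v (norm_ne_zero_iff.2 hv)
  have hvpos : 0 < ‖v‖ := norm_pos_iff.2 hv
  have hjv' : j v = ‖v‖ := by simpa using hjv
  refine ⟨(m / ‖v‖) • j, ?_, ?_, ?_⟩
  · simp only [smul_apply, hjv', smul_eq_mul]
    field_simp
  · simp only [map_smul, smul_apply, hjv', smul_eq_mul, norm_smul,
      Real.norm_eq_abs, abs_div, abs_of_pos (pow_pos hvpos 2), mul_pow, div_pow, sq_abs]
    field_simp
  · simp only [map_smul, smul_apply, hjv', smul_eq_mul, norm_smul, hj,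
      Real.norm_eq_abs, abs_div, abs_of_pos hvpos, mul_one, div_pow, sq_abs]
    field_simp

theorem mem_relLimSub_of_forall_mem_relRegSub {Ω : Set X} {f : X → EReal} {c : X}
    {xs : X →L[ℝ] ℝ} (hc : c ∈ Ω) (h : ∀ ε > 0, xs ∈ relRegSub ε Ω f c) :
    xs ∈ relLimSub Ω f c :=
  ⟨fun k => 1 / ((k : ℝ) + 1), fun _ => c, fun _ => xs, fun k => by positivity,
    fun i k hik => one_div_le_one_div_of_le (by positivity) (by gcongr),
    tendsto_one_div_add_atTop_nhds_zero_nat, fun _ => hc, tendsto_const_nhds, tendsto_const_nhds,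
    fun k => h _ (by positivity), fun _ => tendsto_const_nhds⟩
end

theorem mean_value_inequality_general
    {X : Type*} [NormedAddCommGroup X] [NormedSpace ℝ X]
    (a b : X) (hab : a ≠ b)
    (f : X → EReal)
    (hfin : ∀ x ∈ segment ℝ a b, ∃ r : ℝ, f x = (r : EReal))
    (hlip : ∀ x ∈ segment ℝ a b, ∃ ℓ : ℝ, 0 ≤ ℓ ∧ LocLipRel f (segment ℝ a b) x ℓ) :
    ∃ c ∈ segment ℝ a b, c ≠ b ∧
      ∃ xs ∈ relLimSub (segment ℝ a b) f c,
        (f b).toReal - (f a).toReal ≤ xs (b - a) := by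
  set g : ℝ → ℝ := fun s => (f (lineMap a b s)).toReal
  have hfg : ∀ s ∈ Icc (0 : ℝ) 1, f (lineMap a b s) = g s := fun s hs => by
    obtain ⟨r, hr⟩ := hfin _ (lineMap_mem_segment ℝ a b hs)
    simp [g, hr]
  obtain ⟨K, hK⟩ := (locallyLipschitzOn_toReal_comp_lineMap fun x hx =>
    (hlip x hx).imp fun _ => And.right).exists_lipschitzOnWith_of_compact isCompact_Icc
  obtain ⟨t, ht, hdiff, hslope⟩ := hK.exists_slope_le_deriv zero_lt_one
  obtain ⟨xs, hxs, hJ⟩ := exists_apply_eq_mem_dualityMap (sub_ne_zero.2 hab.symm) (deriv g t)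
  have hc := lineMap_mem_segment ℝ a b (Ioo_subset_Icc_self ht)
  refine ⟨lineMap a b t, hc, fun h => ht.2.ne (lineMap_injective ℝ hab (by simpa using h)), xs,
    mem_relLimSub_of_forall_mem_relRegSub hc fun ε hε => ⟨?_, mem_biUnion
      (smul_sub_mem_tanCone_segment ht _) hJ⟩, ?_⟩
  · refine mem_geomSub_of_eventually_le ?_ hε.le
      (eventually_le_restr_segment hab hfg hdiff.hasDerivAt hxs hε)
    rw [restr, if_pos hc, hfg t (Ioo_subset_Icc_self ht)]
  · simpa [g, hxs] using hslope

/-- mean value inequality for relatively Lipschitzian functions. -/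
theorem mean_value_inequality
    {X : Type*} [NormedAddCommGroup X] [NormedSpace ℝ X] [CompleteSpace X]
    (hX : StandingAssumptions X)
    (a b : X) (hab : a ≠ b)
    (f : X → EReal)
    (hfin : ∀ x ∈ segment ℝ a b, ∃ r : ℝ, f x = (r : EReal))
    (hlip : ∀ x ∈ segment ℝ a b, ∃ ℓ : ℝ, 0 ≤ ℓ ∧ LocLipRel f (segment ℝ a b) x ℓ) :
    ∃ c ∈ segment ℝ a b, c ≠ b ∧
      ∃ xs ∈ relLimSub (segment ℝ a b) f c,
        (f b).toReal - (f a).toReal ≤ xs (b - a) :=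
  mean_value_inequality_general a b hab f hfin hlip
end
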